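/- There exists a constant C>0 (one may take C = e^{|α|T}(1+μ_M T) with μ_M := max_{s∈[0,T]} μ(s)) such that for every t∈[0,T] and every z1, z2∈(0,∞), |w(t,z2)−w(t,z1)| ≤ C·|z2−z1|. That is, z ↦ w(t,z) is Lipschitz continuous uniformly in t. -/

import Mathlib

open MeasureTheory ProbabilityTheory Filter Set
open scoped ENNReal

noncomputable section

/-- The setting of De Angelis–Milazzo–Stabile: a probability space carrying a
Brownian motion `W` with filtration `F`, market/contract parameters, a penalty
function `k` and a mortality force `mu` satisfying Assumption 1 of the paper. -/
structure VASetting (Ω : Type*) [mΩ : MeasurableSpace Ω] where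
  /-- the underlying probability measure `ℙ` -/
  P : Measure Ω
  probP : IsProbabilityMeasure P
  /-- the filtration generated by the Brownian motion -/
  F : Filtration ℝ mΩ
  /-- the driving Brownian motion -/
  W : ℝ → Ω → ℝ
  T : ℝ
  sigma : ℝ
  r : ℝ
  c : ℝ
  g : ℝ
  lam : ℝ
  /-- the penalty (surrender charge) function -/
  k : ℝ → ℝ
  /-- the mortality force -/
  mu : ℝ → ℝ
  hT : 0 < T
  hsigma : 0 < sigma
  hr : 0 ≤ r
  hc : 0 ≤ c
  hg : 0 ≤ g
  hlam : 0 ≤ lam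
  -- `W` is a standard Brownian motion for the filtration `F`
  hW0 : ∀ ω, W 0 ω = 0
  hWcont : ∀ ω, Continuous fun s => W s ω
  hWmeas : ∀ s, Measurable (W s)
  hWadapted : Adapted F W
  hWgauss : ∀ s t : ℝ, 0 ≤ s → s ≤ t →
    Measure.map (fun ω => W t ω - W s ω) P = gaussianReal 0 (Real.toNNReal (t - s))
  hWindep : ∀ s t : ℝ, 0 ≤ s → s ≤ t →
    Indep (MeasurableSpace.comap (fun ω => W t ω - W s ω) inferInstance) (F s) P
  -- Assumption 1 of the paper
  hk_mono : AntitoneOn k (Icc 0 T)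
  hk_smooth : ContDiffOn ℝ 2 k (Icc 0 T)
  hkT : k T = 0
  hmu_nonneg : ∀ t, 0 ≤ t → 0 ≤ mu t
  hmu_smooth : ContDiffOn ℝ 1 mu (Ici 0)
  hmu_growth : ∀ t, 0 ≤ t → deriv mu t ≤ lam * mu t

namespace VASetting

variable {Ω : Type*} [mΩ : MeasurableSpace Ω] (S : VASetting Ω)

/-- `α := g + c − r`. -/
def alpha : ℝ := S.g + S.c - S.r

/-- The geometric Brownian motion `Z^z_s = z·exp((α−σ²/2)s + σW_s)`. -/
def Z (z s : ℝ) (ω : Ω) : ℝ :=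
  z * Real.exp ((S.alpha - S.sigma ^ 2 / 2) * s + S.sigma * S.W s ω)

/-- The survival probability `_s p_t = exp(−∫_0^s μ(t+u) du)`. -/
def surv (t s : ℝ) : ℝ := Real.exp (-(∫ u in (0:ℝ)..s, S.mu (t + u)))

/-- `f(t) = k(t)(c+μ(t)) − k'(t) − c`. -/
def f (t : ℝ) : ℝ := S.k t * (S.c + S.mu t) - deriv S.k t - S.c

/-- `t* = inf{t ∈ [0,T) : f(t) < 0} ∧ T` (with `inf ∅ = ∞`). -/
def tstar : ℝ := sInf ({t | t ∈ Ico (0:ℝ) S.T ∧ S.f t < 0} ∪ {S.T})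

/-- Assumption 2 of the paper: `f` changes sign at most once, from `+` to `−`,
together with one of the two monotonicity conditions (i), (ii). -/
def Assumption2 : Prop :=
  (∀ t ∈ Icc (0:ℝ) S.tstar, 0 ≤ S.f t) ∧
  (∀ t ∈ Ioc S.tstar S.T, S.f t < 0) ∧
  ((∀ t ∈ Ioc S.tstar S.T, deriv S.mu t ≤ 0 ∧ deriv S.f t ≤ 0) ∨
   (∀ t ∈ Ioc S.tstar S.T, 0 < deriv S.mu t ∧ deriv S.f t - S.mu t * S.f t ≤ 0))

/-- The payoff `𝒫_{t,z}(τ)`. -/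
def payoff (t z : ℝ) (τ : Ω → ℝ) (ω : Ω) : ℝ :=
  (∫ s in (0:ℝ)..(τ ω),
    Real.exp (-S.c * s) * S.surv t s *
      (S.f (t + s) + S.mu (t + s) * max (S.Z z s ω - 1) 0)) +
  (if τ ω = S.T - t then
    Real.exp (-S.c * (S.T - t)) * S.surv t (S.T - t) * max (S.Z z (S.T - t) ω - 1) 0
  else 0)

/-- Admissible stopping times for the problem started at time `t`:
`F`-stopping times with values in `[0, T−t]`. -/
def isAdmissible (t : ℝ) (τ : Ω → ℝ) : Prop :=
  IsStoppingTime S.F (fun ω => (τ ω : WithTop ℝ)) ∧ ∀ ω, τ ω ∈ Icc (0:ℝ) (S.T - t)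

/-- The value function `w(t,z) = sup_{0≤τ≤T−t} E[𝒫_{t,z}(τ)]`. -/
def w (t z : ℝ) : ℝ :=
  sSup {x | ∃ τ : Ω → ℝ, S.isAdmissible t τ ∧ x = ∫ ω, S.payoff t z τ ω ∂S.P}

/-- The optimal stopping boundary `b(t) = inf{z>0 : w(t,z)>0}`. -/
def b (t : ℝ) : ℝ := sInf {z | 0 < z ∧ 0 < S.w t z}

/-- The boundary extended by its terminal value `b(T) := 1`. -/
def bEx (t : ℝ) : ℝ := if t < S.T then S.b t else 1

/-- `H(t,z) = μ(t)(z−1)⁺ + f(t)`. -/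
def H (t z : ℝ) : ℝ := S.mu t * max (z - 1) 0 + S.f t

/-- The optimal stopping time `τ*_{t,z} = inf{s ≥ 0 : Z^z_s ≤ b(t+s)} ∧ (T−t)`. -/
def tauStar (t z : ℝ) (ω : Ω) : ℝ :=
  sInf ({s | 0 ≤ s ∧ S.Z z s ω ≤ S.bEx (t + s)} ∪ {S.T - t})

/-- The hitting time of the interior,
`τ'_{t,z} = inf{s ≥ 0 : Z^z_s < b(t+s)} ∧ (T−t)`. -/
def tauStrict (t z : ℝ) (ω : Ω) : ℝ :=
  sInf ({s | 0 ≤ s ∧ S.Z z s ω < S.bEx (t + s)} ∪ {S.T - t})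

/-- The continuation region `𝒞`. -/
def Cset : Set (ℝ × ℝ) := {p | p.1 ∈ Ico (0:ℝ) S.T ∧ 0 < p.2 ∧ 0 < S.w p.1 p.2}

/-- The stopping region `𝒟`. -/
def Dset : Set (ℝ × ℝ) :=
  {p | p.1 ∈ Ico (0:ℝ) S.T ∧ 0 < p.2 ∧ S.w p.1 p.2 = 0} ∪ {p | p.1 = S.T ∧ 0 < p.2}

/-- The log-normal transition density `Φ(z,s,y)` of `Z`. -/
def Phi (z s y : ℝ) : ℝ :=
  1 / (Real.sqrt (2 * Real.pi * S.sigma ^ 2 * s) * y) *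
    Real.exp (-(Real.log (y / z) - (S.alpha - S.sigma ^ 2 / 2) * s) ^ 2 /
      (2 * S.sigma ^ 2 * s))

/-- `μ_M = max_{s ∈ [0,T]} μ(s)`. -/
def muMax : ℝ := sSup (S.mu '' Icc (0:ℝ) S.T)

/-- The level curve `b_δ(t) = inf{z>0 : w(t,z) > δ}`. -/
def bDelta (δ t : ℝ) : ℝ := sInf {z | 0 < z ∧ δ < S.w t z}

/-- The quantity `Θ(t,z,ε)` of the paper. -/
def Theta (t z ε : ℝ) : ℝ :=
  (∫ ω, (if S.T - t - ε ≤ S.tauStar t z ω then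
      Real.exp (-S.c * (S.T - t - ε)) * S.surv (t + ε) (S.T - t - ε) *
        max (S.Z z (S.T - t - ε) ω - 1) 0
    else 0) ∂S.P) -
  (∫ ω, (if S.tauStar t z ω = S.T - t then
      Real.exp (-S.c * (S.T - t)) * S.surv t (S.T - t) * max (S.Z z (S.T - t) ω - 1) 0
    else 0) ∂S.P)

/-- `ψ` solves the boundary integral equation on `Γ_ψ = {ψ > 0}`. -/
def SolvesIntEq (ψ : ℝ → ℝ) : Prop :=
  ∀ t ∈ Ico (0:ℝ) S.T, 0 < ψ t →
    Real.exp (-S.c * (S.T - t)) * S.surv t (S.T - t) *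
        (∫ ω, max (S.Z (ψ t) (S.T - t) ω - 1) 0 ∂S.P) +
      (∫ s in (0:ℝ)..(S.T - t),
        Real.exp (-S.c * s) * S.surv t s *
          (∫ ω, (if ψ (t + s) < S.Z (ψ t) s ω then S.H (t + s) (S.Z (ψ t) s ω) else 0)
            ∂S.P)) = 0

/-- The class `Σ` of candidate boundaries. -/
def SigmaClass (ψ : ℝ → ℝ) : Prop :=
  (∀ t ∈ Icc (0:ℝ) S.T, 0 ≤ ψ t ∧ ψ t ≤ max (1 - S.f t / S.mu t) 0) ∧
  ∃ tψ ∈ Ico S.tstar S.T,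
    (∀ t ∈ Ico (0:ℝ) tψ, ψ t = 0) ∧ ContinuousOn ψ (Icc tψ S.T) ∧ ψ S.T = 1

/-- The Brownian motion `W̃` driving the account value under the pricing
measure (`W_t = σt − W̃_t` as in the paper's Girsanov change of measure). -/
def Wtilde (s : ℝ) (ω : Ω) : ℝ := S.sigma * s - S.W s ω

/-- The account value process `X_s = x₀·exp((r−c−σ²/2)s + σW̃_s)`. -/
def X (x0 s : ℝ) (ω : Ω) : ℝ :=
  x0 * Real.exp ((S.r - S.c - S.sigma ^ 2 / 2) * s + S.sigma * S.Wtilde s ω)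

/-- The pricing (risk-neutral) measure `Q`, with `dQ = M_T^{-1} dP`. -/
def Q : Measure Ω :=
  S.P.withDensity fun ω =>
    ENNReal.ofReal (Real.exp (S.sigma * S.W S.T ω - S.sigma ^ 2 * S.T / 2))

/-- The optimal surrender boundary `ℓ_{x₀}(t) = x₀e^{gt}/b(t)` (with value `∞`
where `b(t) = 0`). -/
def ell (x0 t : ℝ) : ℝ≥0∞ :=
  ENNReal.ofReal (x0 * Real.exp (S.g * t)) / ENNReal.ofReal (S.bEx t)

/-- The optimal surrender time `γ* = inf{s ∈ [0,T) : X_s ≥ ℓ_{x₀}(s)} ∧ T`. -/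
def gammaStar (x0 : ℝ) (ω : Ω) : ℝ :=
  sInf ({s | s ∈ Ico (0:ℝ) S.T ∧ S.ell x0 s ≤ ENNReal.ofReal (S.X x0 s ω)} ∪ {S.T})

/-- The rational price of the VA at time zero, `V₀ = x₀·u(0,1)` where
`u(t,z) = w(t,z) + 1 − k(t)`. -/
def V0 (x0 : ℝ) : ℝ := x0 * (S.w 0 1 + 1 - S.k 0)

end VASetting

/-!
For a fixed stopping time `τ`, the payoff depends on `z` only through `(Z^z_s - 1)⁺` with
`Z^z = z · Z^1`, a function of `z` that is `Z^1_s`-Lipschitz. The discount and survival factors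
lie in `[0, 1]` and `μ ≤ μ_M` on `[0, T]`, so `z ↦ 𝒫_{t,z}(τ)` is Lipschitz with the random
constant `μ_M ∫_0^{T-t} Z^1_s ds + Z^1_{T-t}`, whose expectation is at most `e^{|α|T}(1 + μ_M T)`
because `E[Z^1_s] = e^{αs}`. The bound survives the supremum over `τ`.

The terms in `f` cancel in the difference of two payoffs, so no integrability of the payoffs
themselves and no boundedness of the value sets is needed: in the degenerate cases both Bochner
integrals, resp. both suprema, take the junk value `0`.
-/

theorem norm_integral_sub_integral_le {α E : Type*} [MeasurableSpace α] {μ : Measure α}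
    [NormedAddCommGroup E] [NormedSpace ℝ E] {f g : α → E}
    (hfg : Integrable (fun a => f a - g a) μ) :
    ‖∫ a, f a ∂μ - ∫ a, g a ∂μ‖ ≤ ∫ a, ‖f a - g a‖ ∂μ := by
  by_cases hf : Integrable f μ
  · have hg : Integrable g μ := (hf.sub hfg).congr (ae_of_all _ fun a => sub_sub_cancel (f a) (g a))
    rw [← integral_sub hf hg]
    exact norm_integral_le_integral_norm _
  · have hg : ¬Integrable g μ := fun hg =>
      hf ((hg.add hfg).congr (ae_of_all _ fun a => add_sub_cancel (g a) (f a)))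
    rw [integral_undef hf, integral_undef hg, sub_zero, norm_zero]
    exact integral_nonneg fun _ => norm_nonneg _

theorem abs_sSup_image_sub_sSup_image_le {ι : Type*} {s : Set ι} {F G : ι → ℝ} {D : ℝ}
    (hD : 0 ≤ D) (hFG : ∀ i ∈ s, |F i - G i| ≤ D) :
    |sSup (F '' s) - sSup (G '' s)| ≤ D := by
  suffices key : ∀ F G : ι → ℝ, (∀ i ∈ s, |F i - G i| ≤ D) →
      sSup (F '' s) ≤ sSup (G '' s) + D by
    refine abs_sub_le_iff.2 ⟨by linarith [key F G hFG], ?_⟩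
    have := key G F fun i hi => abs_sub_comm (F i) (G i) ▸ hFG i hi
    linarith
  intro F G hFG
  rcases s.eq_empty_or_nonempty with rfl | hs
  · simpa using hD
  have hle : ∀ i ∈ s, F i ≤ G i + D := fun i hi => by linarith [(abs_le.1 (hFG i hi)).2]
  by_cases hG : BddAbove (G '' s)
  · refine csSup_le (hs.image F) ?_
    rintro _ ⟨i, hi, rfl⟩
    linarith [hle i hi, le_csSup hG (mem_image_of_mem G hi)]
  · have hF : ¬BddAbove (F '' s) := by
      rintro ⟨B, hB⟩
      refine hG ⟨B + D, ?_⟩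
      rintro _ ⟨i, hi, rfl⟩
      linarith [hB (mem_image_of_mem F hi), (abs_le.1 (hFG i hi)).1]
    rw [Real.sSup_of_not_bddAbove hF, Real.sSup_of_not_bddAbove hG, zero_add]
    exact hD

theorem measurable_of_isStoppingTime_coe {Ω : Type*} [m : MeasurableSpace Ω]
    {ℱ : Filtration ℝ m} {τ : Ω → ℝ} (hτ : IsStoppingTime ℱ fun ω => (τ ω : WithTop ℝ)) :
    Measurable τ :=
  measurable_of_Iic fun x => by
    simpa only [preimage, mem_Iic, WithTop.coe_le_coe] using ℱ.le x _ (hτ.measurableSet_le x)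

theorem aestronglyMeasurable_intervalIntegral_stopped {Ω E : Type*} [MeasurableSpace Ω]
    [NormedAddCommGroup E] [NormedSpace ℝ E] {P : Measure Ω} [SFinite P] {u : ℝ}
    {F : Ω → ℝ → E}
    (hF : AEStronglyMeasurable (Function.uncurry F) (P.prod (volume.restrict (Ioc 0 u))))
    {τ : Ω → ℝ} (hτ : Measurable τ) (hτu : ∀ ω, τ ω ∈ Icc 0 u) :
    AEStronglyMeasurable (fun ω => ∫ s in 0..τ ω, F ω s) P := by
  have hset : MeasurableSet {p : Ω × ℝ | p.2 ≤ τ p.1} :=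
    measurableSet_le measurable_snd (hτ.comp measurable_fst)
  refine (hF.indicator hset).integral_prod_right'.congr (ae_of_all _ fun ω => ?_)
  have hslice : (fun s => {p : Ω × ℝ | p.2 ≤ τ p.1}.indicator (Function.uncurry F) (ω, s))
      = (Iic (τ ω)).indicator (F ω) := by
    ext s
    by_cases hs : s ≤ τ ω <;> simp [indicator, hs]
  simp only [hslice]
  rw [setIntegral_indicator measurableSet_Iic, Ioc_inter_Iic, min_eq_right (hτu ω).2,
    intervalIntegral.integral_of_le (hτu ω).1]

theorem mapsTo_const_add_Icc_sub {t T : ℝ} (ht : 0 ≤ t) :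
    MapsTo (t + ·) (Icc 0 (T - t)) (Icc 0 T) :=
  fun s hs => ⟨by linarith [hs.1], by linarith [hs.2]⟩

namespace VASetting

open Real

variable {Ω : Type*} [MeasurableSpace Ω] (S : VASetting Ω)

instance : IsProbabilityMeasure S.P := S.probP

theorem continuousOn_mu : ContinuousOn S.mu (Icc 0 S.T) :=
  S.hmu_smooth.continuousOn.mono Icc_subset_Ici_self

theorem mu_le_muMax {x : ℝ} (hx : x ∈ Icc 0 S.T) : S.mu x ≤ S.muMax :=
  le_csSup (isCompact_Icc.image_of_continuousOn S.continuousOn_mu).bddAbove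
    (mem_image_of_mem _ hx)

theorem muMax_nonneg : 0 ≤ S.muMax :=
  (S.hmu_nonneg 0 le_rfl).trans (S.mu_le_muMax ⟨le_rfl, S.hT.le⟩)

theorem exp_alpha_mul_le {s : ℝ} (hs : s ∈ Icc 0 S.T) :
    exp (S.alpha * s) ≤ exp (|S.alpha| * S.T) :=
  exp_le_exp.2 <| (mul_le_mul_of_nonneg_right (le_abs_self _) hs.1).trans
    (mul_le_mul_of_nonneg_left hs.2 (abs_nonneg _))

theorem continuousOn_surv {t u : ℝ} (ht : 0 ≤ t) (hu : 0 ≤ u) :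
    ContinuousOn (S.surv t) (Icc 0 u) := by
  have hmu : ContinuousOn (fun s => S.mu (t + s)) (uIcc 0 u) :=
    S.hmu_smooth.continuousOn.comp (by fun_prop) fun s hs =>
      add_nonneg ht (by rw [uIcc_of_le hu] at hs; exact hs.1)
  have := (intervalIntegral.continuousOn_primitive_interval
    (hmu.integrableOn_compact (μ := volume) isCompact_uIcc)).neg.rexp
  rwa [uIcc_of_le hu] at this

theorem exp_mul_surv_mem_Icc {t s : ℝ} (ht : 0 ≤ t) (hs : 0 ≤ s) :
    exp (-S.c * s) * S.surv t s ∈ Icc 0 1 := by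
  have hdisc : exp (-S.c * s) ≤ 1 := exp_le_one_iff.2 (by nlinarith [S.hc])
  have hsurv : S.surv t s ≤ 1 :=
    exp_le_one_iff.2 <| neg_nonpos.2 <| intervalIntegral.integral_nonneg hs
      fun u hu => S.hmu_nonneg _ (add_nonneg ht hu.1)
  exact ⟨mul_nonneg (exp_pos _).le (exp_pos _).le, mul_le_one₀ hdisc (exp_pos _).le hsurv⟩

theorem Z_eq_mul_Z_one (z s : ℝ) (ω : Ω) : S.Z z s ω = z * S.Z 1 s ω := by
  rw [Z, Z, one_mul]

theorem Z_one_pos (s : ℝ) (ω : Ω) : 0 < S.Z 1 s ω := by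
  rw [Z, one_mul]
  exact exp_pos _

theorem continuous_Z (z : ℝ) (ω : Ω) : Continuous fun s => S.Z z s ω := by
  have := S.hWcont ω
  unfold Z
  fun_prop

theorem measurable_Z (z s : ℝ) : Measurable (S.Z z s) := by
  have := S.hWmeas s
  unfold Z
  fun_prop

theorem measurable_uncurry_Z (z : ℝ) : Measurable fun p : Ω × ℝ => S.Z z p.2 p.1 := by
  have := (measurable_uncurry_of_continuous_of_measurable S.hWcont S.hWmeas).comp measurable_swap
  unfold Z
  fun_prop

theorem map_W {s : ℝ} (hs : 0 ≤ s) : S.P.map (S.W s) = gaussianReal 0 s.toNNReal := by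
  simpa [S.hW0] using S.hWgauss 0 s le_rfl hs

theorem Z_eq_mul_exp (z s : ℝ) (ω : Ω) :
    S.Z z s ω = z * exp ((S.alpha - S.sigma ^ 2 / 2) * s) * exp (S.sigma * S.W s ω) := by
  rw [Z, mul_assoc, ← exp_add]

theorem integrable_Z (z : ℝ) {s : ℝ} (hs : 0 ≤ s) : Integrable (S.Z z s) S.P := by
  have hexp : Integrable (fun ω => exp (S.sigma * S.W s ω)) S.P := by
    rw [← mgf_pos_iff, mgf_gaussianReal (S.map_W hs)]
    exact exp_pos _
  rw [funext (S.Z_eq_mul_exp z s)]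
  exact hexp.const_mul _

theorem integral_Z (z : ℝ) {s : ℝ} (hs : 0 ≤ s) :
    ∫ ω, S.Z z s ω ∂S.P = z * exp (S.alpha * s) := by
  have hmgf : ∫ ω, exp (S.sigma * S.W s ω) ∂S.P = exp (s * S.sigma ^ 2 / 2) := by
    simpa [mgf, Real.coe_toNNReal _ hs] using mgf_gaussianReal (S.map_W hs) S.sigma
  simp only [S.Z_eq_mul_exp]
  rw [integral_const_mul, hmgf, mul_assoc, ← exp_add]
  ring_nf

theorem integrable_uncurry_Z_one (u : ℝ) :
    Integrable (fun p : Ω × ℝ => S.Z 1 p.2 p.1) (S.P.prod (volume.restrict (Ioc 0 u))) := by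
  have hnorm : ∀ s ∈ Ioc (0 : ℝ) u, exp (S.alpha * s) = ∫ ω, ‖S.Z 1 s ω‖ ∂S.P := fun s hs => by
    simp_rw [Real.norm_of_nonneg (S.Z_one_pos s _).le]
    rw [S.integral_Z 1 hs.1.le, one_mul]
  refine (integrable_prod_iff' (S.measurable_uncurry_Z 1).aestronglyMeasurable).2 ⟨?_, ?_⟩
  · exact (ae_restrict_mem measurableSet_Ioc).mono fun s hs => S.integrable_Z 1 hs.1.le
  · exact (continuous_exp.comp (continuous_const.mul continuous_id)).integrableOn_Ioc.congr
      ((ae_restrict_mem measurableSet_Ioc).mono hnorm)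

theorem integral_setIntegral_Z_one_le {u : ℝ} (hu : u ∈ Icc 0 S.T) :
    ∫ ω, (∫ s in Ioc 0 u, S.Z 1 s ω) ∂S.P ≤ u * exp (|S.alpha| * S.T) := by
  rw [integral_integral_swap (S.integrable_uncurry_Z_one u)]
  calc ∫ s in Ioc 0 u, ∫ ω, S.Z 1 s ω ∂S.P ≤ ∫ _ in Ioc 0 u, exp (|S.alpha| * S.T) := by
        refine setIntegral_mono_on (S.integrable_uncurry_Z_one u).integral_prod_right
          (integrable_const _) measurableSet_Ioc fun s hs => ?_
        rw [S.integral_Z 1 hs.1.le, one_mul]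
        exact S.exp_alpha_mul_le ⟨hs.1.le, hs.2.trans hu.2⟩
    _ = u * exp (|S.alpha| * S.T) := by simp [hu.1]

def payoffLipBound (t : ℝ) (ω : Ω) : ℝ :=
  S.muMax * (∫ s in Ioc 0 (S.T - t), S.Z 1 s ω) + S.Z 1 (S.T - t) ω

theorem integrable_payoffLipBound {t : ℝ} (ht : t ≤ S.T) :
    Integrable (S.payoffLipBound t) S.P :=
  ((S.integrable_uncurry_Z_one _).integral_prod_left.const_mul _).add
    (S.integrable_Z 1 (sub_nonneg.2 ht))

theorem integral_payoffLipBound_le {t : ℝ} (ht : t ∈ Icc 0 S.T) :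
    ∫ ω, S.payoffLipBound t ω ∂S.P ≤ exp (|S.alpha| * S.T) * (1 + S.muMax * S.T) := by
  have hu : S.T - t ∈ Icc 0 S.T := ⟨sub_nonneg.2 ht.2, sub_le_self _ ht.1⟩
  have hint := S.integral_setIntegral_Z_one_le hu
  have hexp := S.exp_alpha_mul_le hu
  have hμ := S.muMax_nonneg
  unfold payoffLipBound
  rw [integral_add ((S.integrable_uncurry_Z_one _).integral_prod_left.const_mul _)
    (S.integrable_Z 1 hu.1), integral_const_mul, S.integral_Z 1 hu.1, one_mul]
  calc S.muMax * ∫ ω, (∫ s in Ioc 0 (S.T - t), S.Z 1 s ω) ∂S.P + exp (S.alpha * (S.T - t))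
      ≤ S.muMax * (S.T * exp (|S.alpha| * S.T)) + exp (|S.alpha| * S.T) := by
        gcongr
        exact hint.trans (mul_le_mul_of_nonneg_right hu.2 (exp_pos _).le)
    _ = exp (|S.alpha| * S.T) * (1 + S.muMax * S.T) := by ring

def rewardRate (t z s : ℝ) (ω : Ω) : ℝ :=
  exp (-S.c * s) * S.surv t s * (S.f (t + s) + S.mu (t + s) * max (S.Z z s ω - 1) 0)

def terminalReward (t z : ℝ) (ω : Ω) : ℝ :=
  exp (-S.c * (S.T - t)) * S.surv t (S.T - t) * max (S.Z z (S.T - t) ω - 1) 0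

theorem payoff_eq (t z : ℝ) (τ : Ω → ℝ) (ω : Ω) :
    S.payoff t z τ ω = (∫ s in 0..τ ω, S.rewardRate t z s ω) +
      if τ ω = S.T - t then S.terminalReward t z ω else 0 :=
  rfl

theorem continuousOn_exp_mul_surv {t : ℝ} (ht : t ∈ Icc 0 S.T) :
    ContinuousOn (fun s => exp (-S.c * s) * S.surv t s) (Icc 0 (S.T - t)) :=
  (by fun_prop : Continuous fun s => exp (-S.c * s)).continuousOn.mul
    (S.continuousOn_surv ht.1 (sub_nonneg.2 ht.2))

theorem continuousOn_mu_const_add {t : ℝ} (ht : 0 ≤ t) :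
    ContinuousOn (fun s => S.mu (t + s)) (Icc 0 (S.T - t)) :=
  S.continuousOn_mu.comp (by fun_prop) (mapsTo_const_add_Icc_sub ht)

theorem abs_max_Z_sub_one_sub_le (z₁ z₂ s : ℝ) (ω : Ω) :
    |max (S.Z z₂ s ω - 1) 0 - max (S.Z z₁ s ω - 1) 0| ≤ |z₂ - z₁| * S.Z 1 s ω :=
  calc _ ≤ |(S.Z z₂ s ω - 1) - (S.Z z₁ s ω - 1)| := abs_max_sub_max_le_abs _ _ _
    _ = |(z₂ - z₁) * S.Z 1 s ω| := by rw [S.Z_eq_mul_Z_one z₂, S.Z_eq_mul_Z_one z₁]; ring_nf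
    _ = |z₂ - z₁| * S.Z 1 s ω := by rw [abs_mul, abs_of_pos (S.Z_one_pos s ω)]

theorem rewardRate_sub (t z₁ z₂ s : ℝ) (ω : Ω) :
    S.rewardRate t z₂ s ω - S.rewardRate t z₁ s ω =
      exp (-S.c * s) * S.surv t s * S.mu (t + s) *
        (max (S.Z z₂ s ω - 1) 0 - max (S.Z z₁ s ω - 1) 0) := by
  unfold rewardRate
  ring

theorem abs_rewardRate_sub_le {t s : ℝ} (ht : 0 ≤ t) (hs : s ∈ Icc 0 (S.T - t))
    (z₁ z₂ : ℝ) (ω : Ω) :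
    |S.rewardRate t z₂ s ω - S.rewardRate t z₁ s ω| ≤ |z₂ - z₁| * (S.muMax * S.Z 1 s ω) := by
  obtain ⟨hd0, hd1⟩ := S.exp_mul_surv_mem_Icc ht hs.1
  have hts : t + s ∈ Icc 0 S.T := mapsTo_const_add_Icc_sub ht hs
  rw [S.rewardRate_sub, abs_mul, abs_mul, abs_of_nonneg hd0, abs_of_nonneg (S.hmu_nonneg _ hts.1)]
  calc _ ≤ 1 * S.muMax * (|z₂ - z₁| * S.Z 1 s ω) :=
        mul_le_mul (mul_le_mul hd1 (S.mu_le_muMax hts) (S.hmu_nonneg _ hts.1) zero_le_one)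
          (S.abs_max_Z_sub_one_sub_le ..) (abs_nonneg _) (by linarith [S.muMax_nonneg])
    _ = _ := by ring

theorem continuousOn_rewardRate_sub {t : ℝ} (ht : t ∈ Icc 0 S.T) (z₁ z₂ : ℝ) (ω : Ω) :
    ContinuousOn (fun s => S.rewardRate t z₂ s ω - S.rewardRate t z₁ s ω)
      (Icc 0 (S.T - t)) := by
  simp_rw [S.rewardRate_sub]
  have := S.continuous_Z z₁ ω
  have := S.continuous_Z z₂ ω
  exact ((S.continuousOn_exp_mul_surv ht).mul (S.continuousOn_mu_const_add ht.1)).mul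
    (by fun_prop)

theorem abs_integral_rewardRate_sub_le {t r : ℝ} (ht : t ∈ Icc 0 S.T) (hr : r ∈ Icc 0 (S.T - t))
    (z₁ z₂ : ℝ) (ω : Ω) :
    |(∫ s in 0..r, S.rewardRate t z₂ s ω) - ∫ s in 0..r, S.rewardRate t z₁ s ω|
      ≤ |z₂ - z₁| * (S.muMax * ∫ s in Ioc 0 (S.T - t), S.Z 1 s ω) := by
  have hsub : Ioc 0 r ⊆ Icc 0 (S.T - t) := Ioc_subset_Icc_self.trans (Icc_subset_Icc_right hr.2)
  have hdiff : IntegrableOn (fun s => S.rewardRate t z₂ s ω - S.rewardRate t z₁ s ω) (Ioc 0 r) :=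
    (S.continuousOn_rewardRate_sub ht z₁ z₂ ω).integrableOn_Icc.mono_set hsub
  have hbound : IntegrableOn (fun s => |z₂ - z₁| * (S.muMax * S.Z 1 s ω)) (Ioc 0 (S.T - t)) := by
    have := S.continuous_Z 1 ω
    exact (by fun_prop : Continuous _).integrableOn_Ioc
  rw [intervalIntegral.integral_of_le hr.1, intervalIntegral.integral_of_le hr.1,
    ← integral_const_mul, ← integral_const_mul]
  calc _ ≤ ∫ s in Ioc 0 r, |S.rewardRate t z₂ s ω - S.rewardRate t z₁ s ω| := by
        simpa only [Real.norm_eq_abs] using norm_integral_sub_integral_le hdiff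
    _ ≤ ∫ s in Ioc 0 r, |z₂ - z₁| * (S.muMax * S.Z 1 s ω) :=
        setIntegral_mono_on hdiff.abs (hbound.mono_set (Ioc_subset_Ioc_right hr.2))
          measurableSet_Ioc fun s hs => S.abs_rewardRate_sub_le ht.1 (hsub hs) z₁ z₂ ω
    _ ≤ ∫ s in Ioc 0 (S.T - t), |z₂ - z₁| * (S.muMax * S.Z 1 s ω) :=
        setIntegral_mono_set hbound
          (ae_of_all _ fun s =>
            mul_nonneg (abs_nonneg _) (mul_nonneg S.muMax_nonneg (S.Z_one_pos s ω).le))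
          (Ioc_subset_Ioc_right hr.2).eventuallyLE

theorem abs_terminalReward_sub_le {t : ℝ} (ht : t ∈ Icc 0 S.T) (z₁ z₂ : ℝ) (ω : Ω) :
    |S.terminalReward t z₂ ω - S.terminalReward t z₁ ω| ≤ |z₂ - z₁| * S.Z 1 (S.T - t) ω := by
  obtain ⟨hd0, hd1⟩ := S.exp_mul_surv_mem_Icc ht.1 (sub_nonneg.2 ht.2)
  rw [terminalReward, terminalReward, ← mul_sub, abs_mul, abs_of_nonneg hd0]
  exact (mul_le_of_le_one_left (abs_nonneg _) hd1).trans (S.abs_max_Z_sub_one_sub_le ..)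

theorem abs_payoff_sub_le {t : ℝ} (ht : t ∈ Icc 0 S.T) {τ : Ω → ℝ} {ω : Ω}
    (hτ : τ ω ∈ Icc 0 (S.T - t)) (z₁ z₂ : ℝ) :
    |S.payoff t z₂ τ ω - S.payoff t z₁ τ ω| ≤ |z₂ - z₁| * S.payoffLipBound t ω := by
  have hterm : |(if τ ω = S.T - t then S.terminalReward t z₂ ω else 0) -
      if τ ω = S.T - t then S.terminalReward t z₁ ω else 0| ≤ |z₂ - z₁| * S.Z 1 (S.T - t) ω := by
    split_ifs
    · exact S.abs_terminalReward_sub_le ht z₁ z₂ ω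
    · simpa using mul_nonneg (abs_nonneg (z₂ - z₁)) (S.Z_one_pos (S.T - t) ω).le
  rw [payoff_eq, payoff_eq, payoffLipBound, mul_add, add_sub_add_comm]
  exact (abs_add_le _ _).trans (add_le_add (S.abs_integral_rewardRate_sub_le ht hτ z₁ z₂ ω) hterm)

theorem aestronglyMeasurable_f_const_add {t : ℝ} (ht : 0 ≤ t) :
    AEStronglyMeasurable (fun s => S.f (t + s)) (volume.restrict (Ioc 0 (S.T - t))) := by
  have hk : ContinuousOn (fun s => S.k (t + s) * (S.c + S.mu (t + s))) (Icc 0 (S.T - t)) :=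
    (S.hk_smooth.continuousOn.comp (by fun_prop) (mapsTo_const_add_Icc_sub ht)).mul
      (continuousOn_const.add (S.continuousOn_mu_const_add ht))
  exact (((hk.mono Ioc_subset_Icc_self).aestronglyMeasurable measurableSet_Ioc).sub
    ((measurable_deriv S.k).comp (measurable_const_add t)).aestronglyMeasurable).sub
    aestronglyMeasurable_const

theorem aestronglyMeasurable_uncurry_rewardRate {t : ℝ} (ht : t ∈ Icc 0 S.T) (z : ℝ) :
    AEStronglyMeasurable (fun p : Ω × ℝ => S.rewardRate t z p.2 p.1)
      (S.P.prod (volume.restrict (Ioc 0 (S.T - t)))) := by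
  have hsnd := Measure.quasiMeasurePreserving_snd (μ := S.P)
    (ν := volume.restrict (Ioc 0 (S.T - t)))
  have hcont : ∀ {g : ℝ → ℝ}, ContinuousOn g (Icc 0 (S.T - t)) →
      AEStronglyMeasurable (fun p : Ω × ℝ => g p.2)
        (S.P.prod (volume.restrict (Ioc 0 (S.T - t)))) :=
    fun hg => ((hg.mono Ioc_subset_Icc_self).aestronglyMeasurable measurableSet_Ioc)
      |>.comp_quasiMeasurePreserving hsnd
  exact (hcont (S.continuousOn_exp_mul_surv ht)).mul
    (((S.aestronglyMeasurable_f_const_add ht.1).comp_quasiMeasurePreserving hsnd).add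
      ((hcont (S.continuousOn_mu_const_add ht.1)).mul
        (((S.measurable_uncurry_Z z).sub_const 1).max measurable_const).aestronglyMeasurable))

theorem aestronglyMeasurable_payoff {t : ℝ} (ht : t ∈ Icc 0 S.T) {τ : Ω → ℝ}
    (hτ : S.isAdmissible t τ) (z : ℝ) : AEStronglyMeasurable (S.payoff t z τ) S.P := by
  have hτm := measurable_of_isStoppingTime_coe hτ.1
  have hterm : Measurable (S.terminalReward t z) :=
    (((S.measurable_Z z _).sub_const 1).max measurable_const).const_mul _
  exact (aestronglyMeasurable_intervalIntegral_stopped (F := fun ω s => S.rewardRate t z s ω)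
    (S.aestronglyMeasurable_uncurry_rewardRate ht z) hτm hτ.2).add
    (hterm.ite (hτm (measurableSet_singleton _)) measurable_const).aestronglyMeasurable

theorem abs_integral_payoff_sub_le {t : ℝ} (ht : t ∈ Icc 0 S.T) {τ : Ω → ℝ}
    (hτ : S.isAdmissible t τ) (z₁ z₂ : ℝ) :
    |∫ ω, S.payoff t z₂ τ ω ∂S.P - ∫ ω, S.payoff t z₁ τ ω ∂S.P|
      ≤ exp (|S.alpha| * S.T) * (1 + S.muMax * S.T) * |z₂ - z₁| := by
  have hbound := fun ω => S.abs_payoff_sub_le ht (hτ.2 ω) z₁ z₂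
  have hG := (S.integrable_payoffLipBound ht.2).const_mul |z₂ - z₁|
  have hdiff : Integrable (fun ω => S.payoff t z₂ τ ω - S.payoff t z₁ τ ω) S.P :=
    hG.mono' ((S.aestronglyMeasurable_payoff ht hτ z₂).sub (S.aestronglyMeasurable_payoff ht hτ z₁))
      (ae_of_all _ hbound)
  calc _ ≤ ∫ ω, |S.payoff t z₂ τ ω - S.payoff t z₁ τ ω| ∂S.P := by
        simpa only [Real.norm_eq_abs] using norm_integral_sub_integral_le hdiff
    _ ≤ ∫ ω, |z₂ - z₁| * S.payoffLipBound t ω ∂S.P := integral_mono hdiff.abs hG hbound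
    _ ≤ |z₂ - z₁| * (exp (|S.alpha| * S.T) * (1 + S.muMax * S.T)) := by
        rw [integral_const_mul]
        exact mul_le_mul_of_nonneg_left (S.integral_payoffLipBound_le ht) (abs_nonneg _)
    _ = _ := mul_comm _ _

theorem w_eq_sSup_image (t z : ℝ) :
    S.w t z = sSup ((fun τ => ∫ ω, S.payoff t z τ ω ∂S.P) '' {τ | S.isAdmissible t τ}) := by
  simp only [w, image, mem_ofPred_eq, eq_comm]

end VASetting

/-- Lemma 4.3: Lipschitz continuity of `z ↦ w(t,z)`, uniformly in
`t`, with constant `C = e^{|α|T}(1 + μ_M T)`. -/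
theorem w_lipschitz_in_z
    {Ω : Type*} [mΩ : MeasurableSpace Ω] (S : VASetting Ω) :
    ∃ C : ℝ, C = Real.exp (|S.alpha| * S.T) * (1 + S.muMax * S.T) ∧ 0 < C ∧
      ∀ t ∈ Set.Icc (0:ℝ) S.T, ∀ z1 ∈ Set.Ioi (0:ℝ), ∀ z2 ∈ Set.Ioi (0:ℝ),
        |S.w t z2 - S.w t z1| ≤ C * |z2 - z1| := by
  have := S.muMax_nonneg
  have := S.hT.le
  refine ⟨_, rfl, by positivity, fun t ht z1 _ z2 _ => ?_⟩
  rw [S.w_eq_sSup_image, S.w_eq_sSup_image]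
  exact abs_sSup_image_sub_sSup_image_le (by positivity) fun τ hτ =>
    S.abs_integral_payoff_sub_le ht hτ z1 z2
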